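/- (Theorem 2, pair Sobol' index) Let μ be a 2-additive capacity on N with Möbius transform m, and let f^Lo(z) = Σ_{i∈N} m(i) z_i + Σ_{{i,j} ⊆ N} m(i,j) min(z_i, z_j). For every pair {p,q} ⊆ N with p ≠ q, the nonnormalized Sobol' index of {p,q}, namely Var[f^Lo_{p,q}] = ∫_0^1 ∫_0^1 (f^Lo_{p,q}(z_p, z_q))² dz_p dz_q, equals m(p,q)²/90. -/

import Mathlib

/-!
A summand of `f^Lo` that does not involve both `z_p` and `z_q` has zero `{p,q}` ANOVA component:
in the alternating sum defining the component, the terms for `T` and `T ∪ {p}` (or `{q}`) have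
equal integrals and opposite signs. So the component is `m(p,q)` times that of
`min(z_p, z_q)`, which the marginal integrals `∫ min(c, y_i) = c - c²/2` and
`∫ min(y_i, y_j) = 1/3` turn into `-max(z_p, z_q) + z_p²/2 + z_q²/2 + 1/3`. Integrating the
square of this piecewise polynomial over the unit square gives `1/90`.
-/

open MeasureTheory Finset

/-- The uniform probability measure on the unit cube `[0,1]^n`. -/
noncomputable def unifCube (n : ℕ) : Measure (Fin n → ℝ) :=
  Measure.pi fun _ => volume.restrict (Set.Icc 0 1)

/-- The Möbius transform of a set function. -/
noncomputable def mobius {n : ℕ} (ξ : Finset (Fin n) → ℝ) (S : Finset (Fin n)) : ℝ :=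
  ∑ T ∈ S.powerset, (-1 : ℝ) ^ (S \ T).card * ξ T

/-- The Fourier transform of a set function. -/
noncomputable def fourierT {n : ℕ} (ξ : Finset (Fin n) → ℝ) (S : Finset (Fin n)) : ℝ :=
  (1 / 2 ^ n : ℝ) * ∑ T : Finset (Fin n), (-1 : ℝ) ^ (S ∩ T).card * ξ T

/-- The Banzhaf interaction transform of a set function. -/
noncomputable def banzhaf {n : ℕ} (ξ : Finset (Fin n) → ℝ) (S : Finset (Fin n)) : ℝ :=
  (1 / 2 : ℝ) ^ (n - S.card) * ∑ K : Finset (Fin n), (-1 : ℝ) ^ (S \ K).card * ξ K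

/-- The multilinear (Owen) extension associated with coefficients `m`. -/
noncomputable def fOw {n : ℕ} (m : Finset (Fin n) → ℝ) (x : Fin n → ℝ) : ℝ :=
  ∑ T : Finset (Fin n), m T * ∏ i ∈ T, x i

/-- A capacity: vanishes on the empty set and is monotone. -/
def Capacity {n : ℕ} (μ : Finset (Fin n) → ℝ) : Prop :=
  μ ∅ = 0 ∧ ∀ S T : Finset (Fin n), S ⊆ T → μ S ≤ μ T

/-- The ANOVA component of `f` associated with the subset `S`. -/
noncomputable def anova {n : ℕ} (f : (Fin n → ℝ) → ℝ) (S : Finset (Fin n))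
    (z : Fin n → ℝ) : ℝ :=
  ∑ T ∈ S.powerset, (-1 : ℝ) ^ (S \ T).card *
    ∫ y, f (fun i => if i ∈ T then z i else y i) ∂unifCube n

/-- The Choquet integral (Lovász extension) of a 2-additive capacity with
Möbius transform `m`. -/
noncomputable def fLo {n : ℕ} (m : Finset (Fin n) → ℝ) (z : Fin n → ℝ) : ℝ :=
  ∑ i, m {i} * z i +
    ∑ i, ∑ j ∈ Finset.univ.filter (fun j => i < j), m {i, j} * min (z i) (z j)

instance : IsProbabilityMeasure (volume.restrict (Set.Icc (0 : ℝ) 1)) :=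
  ⟨by simp [Real.volume_Icc]⟩

instance (n : ℕ) : IsProbabilityMeasure (unifCube n) := by
  unfold unifCube
  infer_instance

lemma unifCube_eq_restrict (n : ℕ) : unifCube n = volume.restrict (Set.Icc 0 1) := by
  rw [unifCube, ← Set.pi_univ_Icc, volume_pi, Measure.restrict_pi_pi]
  rfl

lemma Continuous.integrable_unifCube {n : ℕ} {g : (Fin n → ℝ) → ℝ} (hg : Continuous g) :
    Integrable g (unifCube n) := by
  rw [unifCube_eq_restrict]
  exact hg.integrableOn_Icc

lemma integral_unifCube_comp_eval {n : ℕ} (i : Fin n) {g : ℝ → ℝ} (hg : Continuous g) :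
    ∫ y, g (y i) ∂unifCube n = ∫ x in (0 : ℝ)..1, g x := by
  rw [unifCube, integral_comp_eval hg.aestronglyMeasurable,
    intervalIntegral.integral_of_le zero_le_one, integral_Icc_eq_integral_Ioc]

lemma unifCube_map_pair {n : ℕ} {i j : Fin n} (hij : i ≠ j) :
    (unifCube n).map (fun y => (y i, y j)) =
      (volume.restrict (Set.Icc (0 : ℝ) 1)).prod (volume.restrict (Set.Icc (0 : ℝ) 1)) := by
  have hind :
      ProbabilityTheory.IndepFun (fun y : Fin n → ℝ => y i) (fun y => y j) (unifCube n) :=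
    (ProbabilityTheory.iIndepFun_pi (X := fun _ => id) fun _ => aemeasurable_id).indepFun hij
  rw [hind.map_prod_eq_prod_map_map (measurable_pi_apply i).aemeasurable
    (measurable_pi_apply j).aemeasurable, unifCube,
    (measurePreserving_eval _ i).map_eq, (measurePreserving_eval _ j).map_eq]

lemma setIntegral_Icc_eq_intervalIntegral {a b : ℝ} (hab : a ≤ b) (f : ℝ → ℝ) :
    ∫ x in Set.Icc a b, f x = ∫ x in a..b, f x := by
  rw [integral_Icc_eq_integral_Ioc, intervalIntegral.integral_of_le hab]

lemma integral_min_const_left {c : ℝ} (hc : c ∈ Set.Icc (0 : ℝ) 1) :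
    ∫ x in (0 : ℝ)..1, min c x = c - c ^ 2 / 2 := by
  have hint : ∀ a b : ℝ, IntervalIntegrable (fun x => min c x) volume a b := fun a b =>
    (continuous_const.min continuous_id).intervalIntegrable a b
  rw [← intervalIntegral.integral_add_adjacent_intervals (hint 0 c) (hint c 1),
    intervalIntegral.integral_congr (f := fun x => min c x) (g := fun x => x)
      fun x hx => min_eq_right (Set.uIcc_of_le hc.1 ▸ hx).2,
    intervalIntegral.integral_congr (f := fun x => min c x) (g := fun _ => c)
      fun x hx => min_eq_left (Set.uIcc_of_le hc.2 ▸ hx).1,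
    integral_id, intervalIntegral.integral_const, smul_eq_mul]
  ring

lemma integral_quartic (a b k₀ k₁ k₂ k₃ k₄ : ℝ) :
    ∫ t in a..b, (k₀ + k₁ * t + k₂ * t ^ 2 + k₃ * t ^ 3 + k₄ * t ^ 4) =
      (k₀ * b + k₁ * b ^ 2 / 2 + k₂ * b ^ 3 / 3 + k₃ * b ^ 4 / 4 + k₄ * b ^ 5 / 5) -
        (k₀ * a + k₁ * a ^ 2 / 2 + k₂ * a ^ 3 / 3 + k₃ * a ^ 4 / 4 + k₄ * a ^ 5 / 5) := by
  have hF : ∀ t, HasDerivAt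
      (fun t => k₀ * t + k₁ * t ^ 2 / 2 + k₂ * t ^ 3 / 3 + k₃ * t ^ 4 / 4 + k₄ * t ^ 5 / 5)
      (k₀ + k₁ * t + k₂ * t ^ 2 + k₃ * t ^ 3 + k₄ * t ^ 4) t := fun t =>
    ((((((hasDerivAt_id t).const_mul k₀).add
      (((hasDerivAt_pow 2 t).const_mul k₁).div_const 2)).add
      (((hasDerivAt_pow 3 t).const_mul k₂).div_const 3)).add
      (((hasDerivAt_pow 4 t).const_mul k₃).div_const 4)).add
      (((hasDerivAt_pow 5 t).const_mul k₄).div_const 5)).congr_deriv (by push_cast; ring)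
  exact intervalIntegral.integral_eq_sub_of_hasDerivAt (fun t _ => hF t)
    ((by fun_prop : Continuous fun t : ℝ => k₀ + k₁ * t + k₂ * t ^ 2 + k₃ * t ^ 3 + k₄ * t ^ 4)
      |>.intervalIntegrable a b)

lemma integral_unifCube_min_const_eval {n : ℕ} (i : Fin n) {c : ℝ}
    (hc : c ∈ Set.Icc (0 : ℝ) 1) :
    ∫ y, min c (y i) ∂unifCube n = c - c ^ 2 / 2 := by
  rw [integral_unifCube_comp_eval i (g := fun x => min c x) (continuous_const.min continuous_id),
    integral_min_const_left hc]

lemma integral_unifCube_min_eval_eval {n : ℕ} {i j : Fin n} (hij : i ≠ j) :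
    ∫ y, min (y i) (y j) ∂unifCube n = 1 / 3 := by
  set ν := volume.restrict (Set.Icc (0 : ℝ) 1)
  have hφ : AEMeasurable (fun y : Fin n → ℝ => (y i, y j)) (unifCube n) := by fun_prop
  have hmin : Continuous fun x : ℝ × ℝ => min x.1 x.2 := by fun_prop
  have hint : Integrable (fun x : ℝ × ℝ => min x.1 x.2) (ν.prod ν) := by
    rw [← unifCube_map_pair hij, integrable_map_measure hmin.aestronglyMeasurable hφ]
    exact (hmin.comp (by fun_prop)).integrable_unifCube
  have hinner : ∀ᵐ x ∂ν, ∫ y, min x y ∂ν = x - x ^ 2 / 2 := by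
    filter_upwards [ae_restrict_mem measurableSet_Icc] with x hx
    rw [setIntegral_Icc_eq_intervalIntegral zero_le_one]
    exact integral_min_const_left hx
  calc ∫ y, min (y i) (y j) ∂unifCube n
      = ∫ x : ℝ × ℝ, min x.1 x.2 ∂ν.prod ν := by
        rw [← unifCube_map_pair hij, integral_map hφ hmin.aestronglyMeasurable]
    _ = ∫ x, (x - x ^ 2 / 2) ∂ν := by
        rw [integral_prod _ hint, integral_congr_ae hinner]
    _ = 1 / 3 := by
        rw [setIntegral_Icc_eq_intervalIntegral zero_le_one]
        norm_num [integral_id, integral_pow]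

section Anova

variable {n : ℕ}

lemma Continuous.integrable_unifCube_comp_ite {f : (Fin n → ℝ) → ℝ} (hf : Continuous f)
    (T : Finset (Fin n)) (z : Fin n → ℝ) :
    Integrable (fun y => f (fun i => if i ∈ T then z i else y i)) (unifCube n) :=
  (hf.comp (continuous_pi fun i => by split_ifs <;> fun_prop)).integrable_unifCube

lemma anova_const_mul (c : ℝ) (f : (Fin n → ℝ) → ℝ) (S : Finset (Fin n)) (z : Fin n → ℝ) :
    anova (fun x => c * f x) S z = c * anova f S z := by
  simp only [anova, integral_const_mul, Finset.mul_sum]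
  exact Finset.sum_congr rfl fun _ _ => mul_left_comm _ _ _

lemma anova_add {f g : (Fin n → ℝ) → ℝ} (hf : Continuous f) (hg : Continuous g)
    (S : Finset (Fin n)) (z : Fin n → ℝ) :
    anova (fun x => f x + g x) S z = anova f S z + anova g S z := by
  simp only [anova, ← Finset.sum_add_distrib, ← mul_add]
  refine Finset.sum_congr rfl fun T _ => ?_
  rw [integral_add (hf.integrable_unifCube_comp_ite T z) (hg.integrable_unifCube_comp_ite T z)]

lemma anova_finset_sum {ι : Type*} (s : Finset ι) {f : ι → (Fin n → ℝ) → ℝ}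
    (hf : ∀ k ∈ s, Continuous (f k)) (S : Finset (Fin n)) (z : Fin n → ℝ) :
    anova (fun x => ∑ k ∈ s, f k x) S z = ∑ k ∈ s, anova (f k) S z := by
  simp only [anova]
  rw [Finset.sum_comm]
  refine Finset.sum_congr rfl fun T _ => ?_
  rw [integral_finsetSum _ fun k hk => (hf k hk).integrable_unifCube_comp_ite T z,
    Finset.mul_sum]

lemma anova_eq_zero_of_update_eq {f : (Fin n → ℝ) → ℝ} {S : Finset (Fin n)} {p : Fin n}
    (hp : p ∈ S) (hf : ∀ x w, f (Function.update x p w) = f x) (z : Fin n → ℝ) :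
    anova f S z = 0 := by
  obtain ⟨S, hpS, rfl⟩ : ∃ S', p ∉ S' ∧ S = insert p S' :=
    ⟨S.erase p, Finset.notMem_erase p S, (Finset.insert_erase hp).symm⟩
  rw [anova, Finset.sum_powerset_insert hpS, ← Finset.sum_add_distrib]
  refine Finset.sum_eq_zero fun T hT => ?_
  have hpT : p ∉ T := fun h => hpS (Finset.mem_powerset.1 hT h)
  have hcard : (insert p S \ T).card = (insert p S \ insert p T).card + 1 := by
    rw [Finset.insert_sdiff_of_notMem _ hpT, Finset.insert_sdiff_insert,
      Finset.card_insert_of_notMem (by simp [hpS]), Finset.sdiff_insert_of_notMem hpS]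
  have hint : ∫ y, f (fun i => if i ∈ insert p T then z i else y i) ∂unifCube n =
      ∫ y, f (fun i => if i ∈ T then z i else y i) ∂unifCube n := by
    congr 1 with y
    rw [← hf (fun i => if i ∈ T then z i else y i) (z p)]
    congr 1 with i
    by_cases hi : i = p <;> simp [hi, Function.update]
  rw [hcard, hint, pow_succ]
  ring

lemma anova_eq_zero_of_not_subset {f : (Fin n → ℝ) → ℝ} {S U : Finset (Fin n)}
    (hf : ∀ x x', (∀ i ∈ U, x i = x' i) → f x = f x') (hSU : ¬ S ⊆ U) (z : Fin n → ℝ) :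
    anova f S z = 0 := by
  obtain ⟨p, hpS, hpU⟩ := Finset.not_subset.1 hSU
  refine anova_eq_zero_of_update_eq hpS (fun x w => hf _ _ fun i hi => ?_) z
  exact Function.update_of_ne (ne_of_mem_of_not_mem hi hpU) w x

end Anova

/-- The paper's `f^Lo_{p,q} / m(p,q)` as a function of `(z_p, z_q)`. -/
noncomputable def pairComponent (s t : ℝ) : ℝ :=
  -max s t + s ^ 2 / 2 + t ^ 2 / 2 + 1 / 3

lemma pairComponent_comm (s t : ℝ) : pairComponent s t = pairComponent t s := by
  rw [pairComponent, pairComponent, max_comm]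
  ring

lemma anova_min_eval_eval {n : ℕ} {p q : Fin n} (hpq : p ≠ q) {z : Fin n → ℝ}
    (hzp : z p ∈ Set.Icc (0 : ℝ) 1) (hzq : z q ∈ Set.Icc (0 : ℝ) 1) :
    anova (fun x => min (x p) (x q)) {p, q} z = pairComponent (z p) (z q) := by
  rw [anova, Finset.sum_powerset_insert (by simpa using hpq),
    show ({q} : Finset (Fin n)).powerset = {∅, {q}} from Finset.val_inj.mp rfl]
  simp [pairComponent, hpq, hpq.symm, Finset.sdiff_eq_self_of_disjoint,
    Finset.sdiff_eq_empty_iff_subset.2 (Finset.subset_insert p {q}), min_comm _ (z q),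
    integral_unifCube_min_eval_eval hpq, integral_unifCube_min_const_eval _ hzp,
    integral_unifCube_min_const_eval _ hzq]
  linarith [min_add_max (z q) (z p), max_comm (z p) (z q)]

lemma anova_fLo_pair_of_lt {n : ℕ} (m : Finset (Fin n) → ℝ) {p q : Fin n} (hpq : p < q)
    {z : Fin n → ℝ} (hzp : z p ∈ Set.Icc (0 : ℝ) 1) (hzq : z q ∈ Set.Icc (0 : ℝ) 1) :
    anova (fLo m) {p, q} z = m {p, q} * pairComponent (z p) (z q) := by
  have hsingle : ∀ i, anova (fun x => m {i} * x i) {p, q} z = 0 := fun i =>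
    anova_eq_zero_of_not_subset (U := {i})
      (fun x x' h => by rw [h i (Finset.mem_singleton_self i)])
      (by simp only [Finset.insert_subset_iff, Finset.singleton_subset_iff, Finset.mem_singleton]
          rintro ⟨rfl, rfl⟩; exact hpq.false) z
  have hpair : ∀ i j, ¬ (i = p ∧ j = q) → i < j →
      anova (fun x => m {i, j} * min (x i) (x j)) {p, q} z = 0 := fun i j hij hlt =>
    anova_eq_zero_of_not_subset (U := {i, j})
      (fun x x' h => by rw [h i (by simp), h j (by simp)])
      (by simp only [Finset.insert_subset_iff, Finset.singleton_subset_iff, Finset.mem_insert,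
            Finset.mem_singleton]
          grind) z
  unfold fLo
  rw [anova_add (by fun_prop) (by fun_prop), anova_finset_sum _ (fun _ _ => by fun_prop),
    Finset.sum_eq_zero fun i _ => hsingle i, zero_add,
    anova_finset_sum _ (fun _ _ => by fun_prop),
    Finset.sum_eq_single p (fun i _ hip => ?_) (by simp)]
  · rw [anova_finset_sum _ (fun _ _ => by fun_prop),
      Finset.sum_eq_single q (fun j hj hjq => hpair p j (by grind) (by simpa using hj))
        (by simp [hpq]),
      anova_const_mul, anova_min_eval_eval hpq.ne hzp hzq]
  · rw [anova_finset_sum _ (fun _ _ => by fun_prop)]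
    exact Finset.sum_eq_zero fun j hj => hpair i j (by grind) (by simpa using hj)

lemma anova_fLo_pair {n : ℕ} (m : Finset (Fin n) → ℝ) {p q : Fin n} (hpq : p ≠ q)
    {z : Fin n → ℝ} (hzp : z p ∈ Set.Icc (0 : ℝ) 1) (hzq : z q ∈ Set.Icc (0 : ℝ) 1) :
    anova (fLo m) {p, q} z = m {p, q} * pairComponent (z p) (z q) := by
  rcases hpq.lt_or_gt with h | h
  · exact anova_fLo_pair_of_lt m h hzp hzq
  · rw [Finset.pair_comm, anova_fLo_pair_of_lt m h hzq hzp, pairComponent_comm]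

lemma integral_pairComponent_sq {s : ℝ} (hs : s ∈ Set.Icc (0 : ℝ) 1) :
    ∫ t in (0 : ℝ)..1, pairComponent s t ^ 2 =
      1 / 45 - s ^ 2 / 3 + 2 * s ^ 3 / 3 - s ^ 4 / 3 := by
  have hcont : Continuous fun t => pairComponent s t ^ 2 := by unfold pairComponent; fun_prop
  set a := s ^ 2 / 2 - s + 1 / 3
  set b := s ^ 2 / 2 + 1 / 3
  have below : ∫ t in (0 : ℝ)..s, pairComponent s t ^ 2 =
      ∫ t in (0 : ℝ)..s, (a ^ 2 + 0 * t + a * t ^ 2 + 0 * t ^ 3 + 1 / 4 * t ^ 4) := by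
    refine intervalIntegral.integral_congr fun t ht => ?_
    rw [Set.uIcc_of_le hs.1] at ht
    simp only [pairComponent, max_eq_left ht.2, a]
    ring
  have above : ∫ t in s..1, pairComponent s t ^ 2 =
      ∫ t in s..1, (b ^ 2 + (-2 * b) * t + (b + 1) * t ^ 2 + (-1) * t ^ 3 + 1 / 4 * t ^ 4) := by
    refine intervalIntegral.integral_congr fun t ht => ?_
    rw [Set.uIcc_of_le hs.2] at ht
    simp only [pairComponent, max_eq_right ht.1, b]
    ring
  rw [← intervalIntegral.integral_add_adjacent_intervals (hcont.intervalIntegrable 0 s)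
      (hcont.intervalIntegrable s 1), below, above, integral_quartic, integral_quartic]
  ring

lemma integral_integral_sq_mul_pairComponent (c : ℝ) :
    ∫ s in (0 : ℝ)..1, ∫ t in (0 : ℝ)..1, (c * pairComponent s t) ^ 2 = c ^ 2 / 90 := by
  simp only [mul_pow, intervalIntegral.integral_const_mul]
  rw [intervalIntegral.integral_congr
      (g := fun s => 1 / 45 + 0 * s + (-1 / 3) * s ^ 2 + 2 / 3 * s ^ 3 + (-1 / 3) * s ^ 4)
      fun s hs => ?_, integral_quartic]
  · ring
  · rw [Set.uIcc_of_le zero_le_one] at hs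
    simp only [integral_pairComponent_sq hs]
    ring

theorem sobol_fLo_pair_general (n : ℕ) (μ : Finset (Fin n) → ℝ)
    (p q : Fin n) (hpq : p ≠ q) :
    (∫ s in (0 : ℝ)..1, ∫ t in (0 : ℝ)..1,
        (anova (fLo (mobius μ)) {p, q} (fun i => if i = p then s else t)) ^ 2) =
      (mobius μ {p, q}) ^ 2 / 90 := by
  rw [← integral_integral_sq_mul_pairComponent]
  refine intervalIntegral.integral_congr fun s hs =>
    intervalIntegral.integral_congr fun t ht => ?_
  rw [Set.uIcc_of_le zero_le_one] at hs ht
  simp only [anova_fLo_pair (mobius μ) hpq (z := fun i => if i = p then s else t)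
    (by simpa) (by simpa [hpq.symm]), hpq.symm, if_true, if_false]

/-- Theorem 2 (pair Sobol' index): `Var[f^Lo_{p,q}] = m(p,q)²/90`. -/
theorem sobol_fLo_pair (n : ℕ) (μ : Finset (Fin n) → ℝ) (hμ : Capacity μ)
    (h2 : ∀ T : Finset (Fin n), 2 < T.card → mobius μ T = 0)
    (p q : Fin n) (hpq : p ≠ q) :
    (∫ s in (0 : ℝ)..1, ∫ t in (0 : ℝ)..1,
        (anova (fLo (mobius μ)) {p, q} (fun i => if i = p then s else t)) ^ 2) =
      (mobius μ {p, q}) ^ 2 / 90 :=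
  sobol_fLo_pair_general n μ p q hpq
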